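/- arXiv:1611.05240 — 3 statements merged into one kernel-verified Lean document; each statement's English description precedes it below -/
import Mathlib

section
/- Let γ > 0, μ > 0, M > 0 and a ∈ ℝ with a > 0. Then the function c ↦ exp(a c − μ e^{γ c} M) is integrable on ℝ and ∫_{−∞}^{∞} exp(a c − μ e^{γ c} M) dc = γ^{−1} μ^{−s} Γ(s) M^{−s}, where s = a/γ and Γ is Euler's Gamma function. (With a = Σ_i α_i − 2Q this evaluates the zero-mode integral in the Liouville correlation functions.) -/
open MeasureTheory Set

/-- Evaluation of the zero-mode integral in the Liouville correlation
functions: for a > 0, ∫ exp(a c − μ e^{γc} M) dc = γ⁻¹ μ^{−s} Γ(s) M^{−s}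
with s = a/γ. -/
theorem zero_mode_integral (γ μ M a : ℝ) (hγ : 0 < γ) (hμ : 0 < μ)
    (hM : 0 < M) (ha : 0 < a) :
    Integrable (fun c : ℝ => Real.exp (a * c - μ * Real.exp (γ * c) * M)) ∧
    ∫ c : ℝ, Real.exp (a * c - μ * Real.exp (γ * c) * M)
      = γ⁻¹ * μ ^ (-(a / γ)) * Real.Gamma (a / γ) * M ^ (-(a / γ)) := by
  set s : ℝ := a / γ with hs_def
  have hs : 0 < s := div_pos ha hγ
  have hb : 0 < μ * M := mul_pos hμ hM
  set g : ℝ → ℝ := fun x => γ⁻¹ * (x ^ (s - 1) * Real.exp (-(μ * M * x))) with hg_def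
  -- integrability of g on Ioi 0
  have hg_int : IntegrableOn g (Ioi (0 : ℝ)) := by
    have h0 : IntegrableOn (fun t : ℝ => t ^ (s - 1) * Real.exp (-t)) (Ioi (0 : ℝ)) :=
      (Real.GammaIntegral_convergent hs).congr_fun
        (fun x _ => mul_comm _ _) measurableSet_Ioi
    have h1 : IntegrableOn
        (fun x : ℝ => (μ * M * x) ^ (s - 1) * Real.exp (-(μ * M * x)))
        (Ioi (0 : ℝ)) := by
      have := (integrableOn_Ioi_comp_mul_left_iff
        (fun t : ℝ => t ^ (s - 1) * Real.exp (-t)) 0 hb).2 (by simpa using h0)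
      simpa [mul_zero] using this
    have h2 : IntegrableOn (fun x : ℝ => x ^ (s - 1) * Real.exp (-(μ * M * x)))
        (Ioi (0 : ℝ)) := by
      have h3 : IntegrableOn
          (fun x : ℝ => ((μ * M) ^ (s - 1))⁻¹ *
            ((μ * M * x) ^ (s - 1) * Real.exp (-(μ * M * x)))) (Ioi (0 : ℝ)) :=
        h1.const_mul _
      refine h3.congr_fun (fun x hx => ?_) measurableSet_Ioi
      have hx0 : (0 : ℝ) < x := hx
      dsimp only
      rw [Real.mul_rpow hb.le hx0.le, ← mul_assoc, ← mul_assoc,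
        inv_mul_cancel₀ (ne_of_gt (Real.rpow_pos_of_pos hb (s - 1))), one_mul]
    exact h2.const_mul _
  -- the change of variables
  have hderiv : ∀ x ∈ (univ : Set ℝ), HasDerivWithinAt (fun c => Real.exp (γ * c))
      (γ * Real.exp (γ * x)) univ x := by
    intro x _
    have h := ((Real.hasDerivAt_exp (γ * x)).comp x
      ((hasDerivAt_id x).const_mul γ)).hasDerivWithinAt (s := (univ : Set ℝ))
    rw [show γ * Real.exp (γ * x) = Real.exp (γ * x) * (γ * 1) by ring]
    exact h
  have hinj : InjOn (fun c => Real.exp (γ * c)) univ := by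
    intro x _ y _ h
    have := Real.exp_injective h
    exact mul_left_cancel₀ hγ.ne' this
  have himg : (fun c => Real.exp (γ * c)) '' univ = Ioi (0 : ℝ) := by
    rw [image_univ]
    ext y
    constructor
    · rintro ⟨x, rfl⟩; exact Real.exp_pos _
    · intro hy
      refine ⟨γ⁻¹ * Real.log y, ?_⟩
      show Real.exp (γ * (γ⁻¹ * Real.log y)) = y
      rw [← mul_assoc, mul_inv_cancel₀ hγ.ne', one_mul, Real.exp_log hy]
  have hpt : ∀ c : ℝ, |γ * Real.exp (γ * c)| • g (Real.exp (γ * c))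
      = Real.exp (a * c - μ * Real.exp (γ * c) * M) := by
    intro c
    have he : (0 : ℝ) < Real.exp (γ * c) := Real.exp_pos _
    rw [abs_of_pos (mul_pos hγ he)]
    have hrw : Real.exp (γ * c) ^ (s - 1) = Real.exp (γ * c * (s - 1)) := by
      rw [Real.rpow_def_of_pos he, Real.log_exp]
    have key : a * c - μ * Real.exp (γ * c) * M
        = (γ * c) + (γ * c * (s - 1) + -(μ * M * Real.exp (γ * c))) := by
      have h6 : γ * c * (s - 1) = a * c - γ * c := by
        rw [hs_def]; field_simp
      linarith [h6]
    rw [key, Real.exp_add, Real.exp_add]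
    show γ * Real.exp (γ * c) *
      (γ⁻¹ * (Real.exp (γ * c) ^ (s - 1) * Real.exp (-(μ * M * Real.exp (γ * c)))))
      = _
    rw [hrw]
    field_simp
  have hint : Integrable (fun c : ℝ => Real.exp (a * c - μ * Real.exp (γ * c) * M)) := by
    rw [← integrableOn_univ]
    have := (integrableOn_image_iff_integrableOn_abs_deriv_smul MeasurableSet.univ
      hderiv hinj g)
    rw [himg] at this
    exact (this.1 hg_int).congr_fun (fun x _ => hpt x) MeasurableSet.univ
  refine ⟨hint, ?_⟩
  have heq := integral_image_eq_integral_abs_deriv_smul MeasurableSet.univ hderiv hinj g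
  rw [himg] at heq
  have h4 : ∫ c : ℝ, Real.exp (a * c - μ * Real.exp (γ * c) * M)
      = ∫ x in Ioi (0:ℝ), g x := by
    rw [heq, ← setIntegral_univ]
    exact setIntegral_congr_fun MeasurableSet.univ fun x _ => (hpt x).symm
  rw [h4]
  have hG : ∫ x in Ioi (0:ℝ), x ^ (s - 1) * Real.exp (-(μ * M * x))
      = (1 / (μ * M)) ^ s * Real.Gamma s := Real.integral_rpow_mul_exp_neg_mul_Ioi hs hb
  rw [hg_def]
  simp only
  rw [integral_const_mul, hG]
  have h5 : (1 / (μ * M)) ^ s = μ ^ (-s) * M ^ (-s) := by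
    rw [one_div, Real.inv_rpow hb.le, ← Real.rpow_neg hb.le,
      Real.mul_rpow hμ.le hM.le]
  rw [h5]; ring
end

section
/- Let (Ω, 𝔽, P) be a probability space, s > 0, γ > 0, μ > 0, and let M : Ω → (0,∞) be measurable with E_P[M^{−s}] < ∞. Define the measure ν on Ω × ℝ by dν(ω,c) = exp(s γ c − μ e^{γ c} M(ω)) dP(ω) dc. Then ν is a finite measure with total mass γ^{−1} μ^{−s} Γ(s) E_P[M^{−s}], and under the normalized probability measure ν̂ = ν/ν(Ω×ℝ), the random variable A(ω,c) := e^{γ c} M(ω) has the Gamma(s, μ) distribution: for every bounded measurable F : (0,∞) → ℝ, ∫ F(A) dν̂ = (μ^s / Γ(s)) ∫₀^∞ F(y) y^{s−1} e^{−μ y} dy. (This identifies the law of the total volume A = e^{γc} M_{ĝ,γ}(ℂ) of the Liouville measure as Γ(s, μ) with s = 2 − 4/γ².) -/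
open MeasureTheory
open scoped ENNReal NNReal

private lemma image_exp_mul (γ m : ℝ) (hγ : 0 < γ) (hm : 0 < m) :
    (fun c : ℝ => Real.exp (γ * c) * m) '' Set.univ = Set.Ioi 0 := by
  ext y
  simp only [Set.image_univ, Set.mem_range, Set.mem_Ioi]
  constructor
  · rintro ⟨c, rfl⟩; positivity
  · intro hy
    refine ⟨γ⁻¹ * Real.log (y / m), ?_⟩
    rw [← mul_assoc, mul_inv_cancel₀ hγ.ne', one_mul, Real.exp_log (by positivity),
      div_mul_cancel₀ _ hm.ne']

private lemma hasDeriv_exp_mul (γ m : ℝ) :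
    ∀ c ∈ Set.univ, HasDerivWithinAt (fun c : ℝ => Real.exp (γ * c) * m)
      (Real.exp (γ * c) * γ * m) Set.univ c := by
  intro c _
  have h : HasDerivAt (fun c : ℝ => Real.exp (γ * c) * m) (Real.exp (γ * c) * γ * m) c := by
    have h1 : HasDerivAt (fun c : ℝ => γ * c) γ c := by
      simpa using (hasDerivAt_id c).const_mul γ
    exact (h1.exp).mul_const m
  exact h.hasDerivWithinAt

private lemma injOn_exp_mul (γ m : ℝ) (hγ : 0 < γ) (hm : 0 < m) :
    Set.InjOn (fun c : ℝ => Real.exp (γ * c) * m) Set.univ := by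
  intro a _ b _ h
  have := mul_right_cancel₀ hm.ne' h
  have := Real.exp_injective this
  exact mul_left_cancel₀ hγ.ne' this

private lemma pointwise_eq (s γ μ m : ℝ) (hγ : 0 < γ) (hm : 0 < m) (g : ℝ → ℝ) (c : ℝ) :
    g (Real.exp (γ * c) * m) * Real.exp (s * γ * c - μ * Real.exp (γ * c) * m)
      = (γ⁻¹ * m ^ (-s)) *
        (|Real.exp (γ * c) * γ * m| •
          ((fun y => g y * y ^ (s - 1) * Real.exp (-μ * y)) (Real.exp (γ * c) * m))) := by
  have hy : (0:ℝ) < Real.exp (γ * c) * m := by positivity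
  beta_reduce
  rw [smul_eq_mul, abs_of_pos (by positivity),
    Real.rpow_sub hy, Real.rpow_one,
    Real.mul_rpow (Real.exp_pos _).le hm.le, ← Real.exp_mul,
    Real.rpow_neg hm.le,
    show s * γ * c - μ * Real.exp (γ * c) * m = γ * c * s - μ * (Real.exp (γ * c) * m) by ring,
    Real.exp_sub]
  rw [neg_mul, Real.exp_neg]
  have hms : (0:ℝ) < m ^ s := Real.rpow_pos_of_pos hm s
  field_simp

private lemma subst_integral (s γ μ m : ℝ) (hγ : 0 < γ) (hm : 0 < m) (g : ℝ → ℝ) :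
    ∫ c : ℝ, g (Real.exp (γ * c) * m) * Real.exp (s * γ * c - μ * Real.exp (γ * c) * m)
      = γ⁻¹ * m ^ (-s) *
        ∫ y in Set.Ioi (0:ℝ), g y * y ^ (s - 1) * Real.exp (-μ * y) := by
  have key := integral_image_eq_integral_abs_deriv_smul MeasurableSet.univ
    (hasDeriv_exp_mul γ m) (injOn_exp_mul γ m hγ hm)
    (fun y => g y * y ^ (s - 1) * Real.exp (-μ * y))
  rw [image_exp_mul γ m hγ hm, Measure.restrict_univ] at key
  rw [key, ← integral_const_mul]
  exact integral_congr_ae (Filter.Eventually.of_forall fun c => pointwise_eq s γ μ m hγ hm g c)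

private lemma subst_integrable (s γ μ m : ℝ) (hγ : 0 < γ) (hm : 0 < m) (g : ℝ → ℝ)
    (hg : IntegrableOn (fun y => g y * y ^ (s - 1) * Real.exp (-μ * y)) (Set.Ioi 0)) :
    Integrable (fun c : ℝ =>
      g (Real.exp (γ * c) * m) * Real.exp (s * γ * c - μ * Real.exp (γ * c) * m)) := by
  have h1 := (integrableOn_image_iff_integrableOn_abs_deriv_smul MeasurableSet.univ
    (hasDeriv_exp_mul γ m) (injOn_exp_mul γ m hγ hm)
    (fun y => g y * y ^ (s - 1) * Real.exp (-μ * y))).mp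
    (by rw [image_exp_mul γ m hγ hm]; exact hg)
  rw [IntegrableOn, Measure.restrict_univ] at h1
  have h2 := h1.const_mul (γ⁻¹ * m ^ (-s))
  exact h2.congr (Filter.Eventually.of_forall fun c => (pointwise_eq s γ μ m hγ hm g c).symm)

/-- The measure dν(ω,c) = exp(sγc − μ e^{γc} M(ω)) dP(ω) dc has total mass
γ⁻¹ μ^{−s} Γ(s) E_P[M^{−s}], and under the normalized measure ν̂ the random
variable A(ω,c) = e^{γc} M(ω) has the Gamma(s, μ) distribution. -/
theorem liouville_total_mass_gamma_law {Ω : Type*} [MeasurableSpace Ω]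
    (P : Measure Ω) [IsProbabilityMeasure P] (s γ μ : ℝ)
    (hs : 0 < s) (hγ : 0 < γ) (hμ : 0 < μ)
    (M : Ω → ℝ) (hM_meas : Measurable M) (hM_pos : ∀ ω, 0 < M ω)
    (hM_int : Integrable (fun ω => M ω ^ (-s)) P)
    (ν : Measure (Ω × ℝ))
    (hν : ν = (P.prod volume).withDensity
      (fun p => ENNReal.ofReal
        (Real.exp (s * γ * p.2 - μ * Real.exp (γ * p.2) * M p.1)))) :
    ν Set.univ
      = ENNReal.ofReal (γ⁻¹ * μ ^ (-s) * Real.Gamma s * ∫ ω, M ω ^ (-s) ∂P) ∧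
    ∀ F : ℝ → ℝ, Measurable F → (∃ C, ∀ y, |F y| ≤ C) →
      ∫ p, F (Real.exp (γ * p.2) * M p.1) ∂((ν Set.univ)⁻¹ • ν)
        = μ ^ s / Real.Gamma s
          * ∫ y in Set.Ioi (0 : ℝ), F y * y ^ (s - 1) * Real.exp (-μ * y) := by
  set ρ : Ω × ℝ → ℝ :=
    fun p => Real.exp (s * γ * p.2 - μ * Real.exp (γ * p.2) * M p.1) with hρ_def
  have hρ_meas : Measurable ρ := by
    apply Real.measurable_exp.comp
    exact (measurable_snd.const_mul (s * γ)).sub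
      (((Real.measurable_exp.comp (measurable_snd.const_mul γ)).const_mul μ).mul
        (hM_meas.comp measurable_fst))
  -- integrability and value of the gamma-type integral
  have hint_h : IntegrableOn (fun y : ℝ => y ^ (s - 1) * Real.exp (-μ * y)) (Set.Ioi 0) := by
    have h0 := (integrableOn_Ioi_comp_mul_left_iff
      (fun x : ℝ => Real.exp (-x) * x ^ (s - 1)) 0 hμ).mpr
      (by simpa using Real.GammaIntegral_convergent hs)
    have h1 := h0.const_mul (μ ^ (1 - s))
    refine IntegrableOn.congr_fun h1 (fun x hx => ?_) measurableSet_Ioi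
    have hx0 : (0:ℝ) < x := hx
    rw [Real.mul_rpow hμ.le hx0.le]
    rw [show (1:ℝ) - s = -(s-1) by ring, Real.rpow_neg hμ.le]
    have : μ ^ (s-1) ≠ 0 := (Real.rpow_pos_of_pos hμ _).ne'
    field_simp
  have hIval : ∫ y in Set.Ioi (0:ℝ), y ^ (s - 1) * Real.exp (-μ * y)
      = μ ^ (-s) * Real.Gamma s := by
    have h0 := integral_comp_mul_left_Ioi (fun x : ℝ => Real.exp (-x) * x ^ (s - 1)) 0 hμ
    beta_reduce at h0
    rw [mul_zero, ← Real.Gamma_eq_integral hs] at h0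
    have lhs_eq : ∫ x in Set.Ioi (0:ℝ), Real.exp (-(μ * x)) * (μ * x) ^ (s - 1)
        = μ ^ (s - 1) * ∫ y in Set.Ioi (0:ℝ), y ^ (s - 1) * Real.exp (-μ * y) := by
      rw [← integral_const_mul]
      refine setIntegral_congr_fun measurableSet_Ioi (fun x hx => ?_)
      have hx0 : (0:ℝ) < x := hx
      rw [Real.mul_rpow hμ.le hx0.le, neg_mul]
      ring
    rw [lhs_eq] at h0
    have hμs : (0:ℝ) < μ ^ (s - 1) := Real.rpow_pos_of_pos hμ _
    have key : μ ^ (-s) = (μ ^ (s-1))⁻¹ * μ⁻¹ := by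
      rw [← Real.rpow_neg_one μ, ← Real.rpow_neg hμ.le, ← Real.rpow_add hμ]
      ring_nf
    rw [key]
    rw [smul_eq_mul] at h0
    field_simp at h0 ⊢
    linarith [h0]
  -- inner integral for part 1
  have hinner1 : ∀ ω, ∫ c, ρ (ω, c)
      = γ⁻¹ * (M ω) ^ (-s) * (μ ^ (-s) * Real.Gamma s) := by
    intro ω
    have h0 := subst_integral s γ μ (M ω) hγ (hM_pos ω) (fun _ => 1)
    simp only [one_mul] at h0
    simp only [hρ_def]
    rw [h0, hIval]
  have hinner1_int : ∀ ω, Integrable (fun c => ρ (ω, c)) := by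
    intro ω
    have h0 := subst_integrable s γ μ (M ω) hγ (hM_pos ω) (fun _ => 1)
      (IntegrableOn.congr_fun hint_h (fun x _ => by simp) measurableSet_Ioi)
    simpa using h0
  have hofReal_meas : Measurable fun p => ENNReal.ofReal (ρ p) :=
    ENNReal.measurable_ofReal.comp hρ_meas
  have h1 : ν Set.univ
      = ENNReal.ofReal (γ⁻¹ * μ ^ (-s) * Real.Gamma s * ∫ ω, M ω ^ (-s) ∂P) := by
    rw [hν, withDensity_apply _ MeasurableSet.univ, Measure.restrict_univ]
    rw [lintegral_prod _ hofReal_meas.aemeasurable]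
    have step1 : ∀ ω, ∫⁻ c, ENNReal.ofReal (ρ (ω, c))
        = ENNReal.ofReal ((γ⁻¹ * μ ^ (-s) * Real.Gamma s) * M ω ^ (-s)) := by
      intro ω
      rw [← ofReal_integral_eq_lintegral_ofReal (hinner1_int ω)
        (Filter.Eventually.of_forall fun c => (Real.exp_pos _).le), hinner1 ω]
      congr 1
      ring
    simp_rw [step1]
    rw [← ofReal_integral_eq_lintegral_ofReal (hM_int.const_mul _)
      (Filter.Eventually.of_forall fun ω =>
        mul_nonneg (by positivity) (Real.rpow_pos_of_pos (hM_pos ω) _).le)]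
    rw [integral_const_mul]
  refine ⟨h1, ?_⟩
  rintro F hF ⟨C, hC⟩
  have hC0 : (0:ℝ) ≤ C := le_trans (abs_nonneg _) (hC 0)
  have hE_pos : 0 < ∫ ω, M ω ^ (-s) ∂P := by
    rw [integral_pos_iff_support_of_nonneg
      (fun ω => (Real.rpow_pos_of_pos (hM_pos ω) _).le) hM_int]
    have hsupp : Function.support (fun ω => M ω ^ (-s)) = Set.univ :=
      Set.eq_univ_of_forall fun ω => (Real.rpow_pos_of_pos (hM_pos ω) _).ne'
    rw [hsupp, measure_univ]
    exact one_pos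
  have hΓ : 0 < Real.Gamma s := Real.Gamma_pos_of_pos hs
  have hμs : (0:ℝ) < μ ^ (-s) := Real.rpow_pos_of_pos hμ _
  have hK_pos : 0 < γ⁻¹ * μ ^ (-s) * Real.Gamma s * ∫ ω, M ω ^ (-s) ∂P :=
    mul_pos (mul_pos (mul_pos (inv_pos.mpr hγ) hμs) hΓ) hE_pos
  -- integrability of F * gamma density on Ioi 0
  have hIF_int : IntegrableOn
      (fun y => F y * y ^ (s - 1) * Real.exp (-μ * y)) (Set.Ioi 0) := by
    apply Integrable.mono (hint_h.abs.const_mul C)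
    · apply Measurable.aestronglyMeasurable
      fun_prop
    · refine Filter.Eventually.of_forall fun y => ?_
      simp only [Real.norm_eq_abs, abs_mul, abs_abs]
      rw [mul_assoc]
      exact le_trans (mul_le_mul_of_nonneg_right (hC y) (by positivity))
        (mul_le_mul_of_nonneg_right (le_abs_self C) (by positivity))
  have hIρ : Integrable ρ (P.prod volume) := by
    refine ⟨hρ_meas.aestronglyMeasurable, ?_⟩
    rw [hasFiniteIntegral_iff_ofReal
      (Filter.Eventually.of_forall fun p => (Real.exp_pos _).le)]
    have hh : ∫⁻ p, ENNReal.ofReal (ρ p) ∂(P.prod volume) = ν Set.univ := by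
      rw [hν, withDensity_apply _ MeasurableSet.univ, Measure.restrict_univ]
    rw [hh, h1]
    exact ENNReal.ofReal_lt_top
  have hA_meas : Measurable fun p : Ω × ℝ => Real.exp (γ * p.2) * M p.1 :=
    (Real.measurable_exp.comp (measurable_snd.const_mul γ)).mul (hM_meas.comp measurable_fst)
  have hint_prod : Integrable
      (fun p => ρ p * F (Real.exp (γ * p.2) * M p.1)) (P.prod volume) := by
    apply Integrable.mono (hIρ.const_mul C)
    · exact (hρ_meas.mul (hF.comp hA_meas)).aestronglyMeasurable
    · refine Filter.Eventually.of_forall fun p => ?_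
      simp only [Real.norm_eq_abs, abs_mul]
      calc |ρ p| * |F (Real.exp (γ * p.2) * M p.1)|
          ≤ |ρ p| * C := mul_le_mul_of_nonneg_left (hC _) (abs_nonneg _)
        _ ≤ |ρ p| * |C| := mul_le_mul_of_nonneg_left (le_abs_self C) (abs_nonneg _)
        _ = |C| * |ρ p| := mul_comm _ _
  -- compute the integral w.r.t. ν
  have hνint : ∫ p, F (Real.exp (γ * p.2) * M p.1) ∂ν
      = ∫ p, ρ p * F (Real.exp (γ * p.2) * M p.1) ∂(P.prod volume) := by
    rw [hν]
    have hcoe : (fun p : Ω × ℝ => ENNReal.ofReal (ρ p))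
        = fun p => ((fun p => Real.toNNReal (ρ p)) p : ℝ≥0∞) := rfl
    rw [hcoe, integral_withDensity_eq_integral_smul (hρ_meas.real_toNNReal)]
    refine integral_congr_ae (Filter.Eventually.of_forall fun p => ?_)
    simp only [hρ_def, NNReal.smul_def, Real.coe_toNNReal']
    rw [max_eq_left (Real.exp_pos _).le, smul_eq_mul]
  have hinner2 : ∀ ω, ∫ c, ρ (ω, c) * F (Real.exp (γ * c) * M ω)
      = γ⁻¹ * (M ω) ^ (-s) *
        ∫ y in Set.Ioi (0:ℝ), F y * y ^ (s - 1) * Real.exp (-μ * y) := by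
    intro ω
    have h0 := subst_integral s γ μ (M ω) hγ (hM_pos ω) F
    rw [← h0]
    refine integral_congr_ae (Filter.Eventually.of_forall fun c => ?_)
    simp only [hρ_def]
    ring
  set IF := ∫ y in Set.Ioi (0:ℝ), F y * y ^ (s - 1) * Real.exp (-μ * y) with hIF_def
  rw [integral_smul_measure, h1, hνint, integral_prod _ hint_prod]
  simp_rw [hinner2]
  have houter : ∫ ω, γ⁻¹ * (M ω) ^ (-s) * IF ∂P
      = (γ⁻¹ * IF) * ∫ ω, M ω ^ (-s) ∂P := by
    rw [← integral_const_mul]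
    refine integral_congr_ae (Filter.Eventually.of_forall fun ω => ?_)
    ring
  rw [houter]
  have htoReal : ((ENNReal.ofReal
      (γ⁻¹ * μ ^ (-s) * Real.Gamma s * ∫ ω, M ω ^ (-s) ∂P))⁻¹).toReal
      = (γ⁻¹ * μ ^ (-s) * Real.Gamma s * ∫ ω, M ω ^ (-s) ∂P)⁻¹ := by
    rw [ENNReal.toReal_inv, ENNReal.toReal_ofReal hK_pos.le]
  rw [smul_eq_mul, htoReal, Real.rpow_neg hμ.le]
  have hμs' : (0:ℝ) < μ ^ s := Real.rpow_pos_of_pos hμ _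
  field_simp
end

section
/- Let s > 0, μ > 0, and let F : (0,∞) → ℝ be bounded and continuous. Then lim_{ε → 0⁺} ε^s Σ_{N=1}^{∞} e^{−μ ε N} N^{s−1} F(ε N) = ∫₀^∞ F(y) y^{s−1} e^{−μ y} dy. (This is the Riemann-sum convergence underlying the scaling limit ε ν_{μ̄+εμ,γ} of the law of the total area of random triangulations, with s − 1 = 1 − 4/γ².) -/
open MeasureTheory Filter

section RiemannAux

open Set Real

private lemma riemann_aux_int_rpow_exp {s μ : ℝ} (hs : 0 < s) (hμ : 0 < μ) :
    IntegrableOn (fun x : ℝ => x ^ (s - 1) * Real.exp (-(μ * x))) (Set.Ioi 0) := by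
  have h0 : IntegrableOn (fun x : ℝ => Real.exp (-(μ * x)) * (μ * x) ^ (s - 1)) (Set.Ioi 0) := by
    have h := (integrableOn_Ioi_comp_mul_left_iff
      (fun x : ℝ => Real.exp (-x) * x ^ (s - 1)) 0 hμ).mpr
    simpa using h (by simpa using Real.GammaIntegral_convergent hs)
  have h1 : IntegrableOn (fun x : ℝ => ((μ : ℝ) ^ (s - 1))⁻¹ *
      (Real.exp (-(μ * x)) * (μ * x) ^ (s - 1))) (Set.Ioi 0) := h0.const_mul _
  refine h1.congr_fun (fun x hx => ?_) measurableSet_Ioi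
  have hx0 : (0:ℝ) < x := hx
  beta_reduce
  rw [Real.mul_rpow hμ.le hx0.le]
  field_simp [(Real.rpow_pos_of_pos hμ (s-1)).ne']

private lemma riemann_aux_rpow_step_bound {s : ℝ} {y z : ℝ}
    (hy : 0 < y) (h1 : y ≤ z) (h2 : z ≤ y + 1) :
    z ^ (s - 1) ≤ (2 ^ (s - 1) + 1) * (1 + y ^ (s - 1)) := by
  have hy1 : (0:ℝ) ≤ 1 + y ^ (s - 1) := by positivity
  have h2pos : (0:ℝ) < 2 ^ (s - 1) := Real.rpow_pos_of_pos two_pos _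
  rcases le_or_gt s 1 with hs | hs
  · have hzy : z ^ (s - 1) ≤ y ^ (s - 1) :=
      Real.rpow_le_rpow_of_nonpos hy h1 (by linarith)
    calc z ^ (s-1) ≤ y ^ (s-1) := hzy
      _ ≤ 1 * (1 + y ^ (s-1)) := by linarith
      _ ≤ (2 ^ (s-1) + 1) * (1 + y ^ (s-1)) := by
          apply mul_le_mul_of_nonneg_right _ hy1
          linarith
  · have hs' : 0 ≤ s - 1 := by linarith
    have hmax : z ≤ 2 * max 1 y := by
      have hh : y + 1 ≤ max 1 y + max 1 y := add_le_add (le_max_right _ _) (le_max_left _ _)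
      linarith
    have hmb : (max 1 y) ^ (s - 1) ≤ 1 + y ^ (s - 1) := by
      rcases le_total y 1 with h | h
      · rw [max_eq_left h, Real.one_rpow]
        have : (0:ℝ) ≤ y ^ (s-1) := Real.rpow_nonneg hy.le _
        linarith
      · rw [max_eq_right h]
        linarith
    calc z ^ (s-1) ≤ (2 * max 1 y) ^ (s-1) :=
          Real.rpow_le_rpow (by linarith) hmax hs'
      _ = 2 ^ (s-1) * (max 1 y) ^ (s-1) :=
          Real.mul_rpow (by norm_num) (le_max_of_le_left zero_le_one)
      _ ≤ 2 ^ (s-1) * (1 + y ^ (s-1)) := mul_le_mul_of_nonneg_left hmb h2pos.le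
      _ ≤ (2 ^ (s-1) + 1) * (1 + y ^ (s-1)) := by nlinarith

end RiemannAux

/-- Riemann-sum convergence underlying the scaling limit of the law of the
total area of random triangulations:
lim_{ε→0⁺} ε^s Σ_{N≥1} e^{−μεN} N^{s−1} F(εN) = ∫₀^∞ F(y) y^{s−1} e^{−μy} dy. -/
theorem riemann_sum_gamma_limit (s μ : ℝ) (hs : 0 < s) (hμ : 0 < μ)
    (F : ℝ → ℝ) (hF_cont : Continuous F) (hF_bdd : ∃ C, ∀ y, |F y| ≤ C) :
    Tendsto
      (fun ε : ℝ => ε ^ s *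
        ∑' N : ℕ+, Real.exp (-μ * ε * N) * (N : ℝ) ^ (s - 1) * F (ε * N))
      (nhdsWithin 0 (Set.Ioi 0))
      (nhds (∫ y in Set.Ioi (0 : ℝ), F y * y ^ (s - 1) * Real.exp (-μ * y))) := by
  obtain ⟨C, hC⟩ := hF_bdd
  have hC0 : 0 ≤ C := (abs_nonneg _).trans (hC 0)
  set g : ℝ → ℝ := fun z => F z * z ^ (s - 1) * Real.exp (-μ * z) with hg_def
  set B : ℝ → ℝ := fun y =>
    C * ((2 ^ (s-1) + 1) * (1 + y ^ (s-1)) * Real.exp (-(μ * y))) with hB_def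
  -- measurability
  have hg_meas : Measurable g := by
    have h1 : Measurable fun z : ℝ => z ^ (s - 1) := by fun_prop
    exact (hF_cont.measurable.mul h1).mul
      ((Real.continuous_exp.comp (continuous_const.mul continuous_id)).measurable)
  have hstep_meas : ∀ ε : ℝ, Measurable fun y : ℝ => ε * ((⌈y / ε⌉₊ : ℕ) : ℝ) := fun ε =>
    measurable_const.mul
      (measurable_from_top.comp (Nat.measurable_ceil.comp (measurable_id.div_const ε)))
  have hmeas : ∀ ε : ℝ, AEStronglyMeasurable (fun y : ℝ => g (ε * ((⌈y / ε⌉₊ : ℕ) : ℝ)))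
      (volume.restrict (Set.Ioi 0)) := fun ε =>
    (hg_meas.comp (hstep_meas ε)).aestronglyMeasurable
  -- ceiling bounds
  have hceil_low : ∀ {ε y : ℝ}, 0 < ε → 0 < y → y ≤ ε * ((⌈y / ε⌉₊ : ℕ) : ℝ) := by
    intro ε y hε hy
    have h := Nat.le_ceil (y / ε)
    rw [div_le_iff₀ hε] at h
    linarith [h]
  have hceil_hi : ∀ {ε y : ℝ}, 0 < ε → 0 < y → ε * ((⌈y / ε⌉₊ : ℕ) : ℝ) ≤ y + ε := by
    intro ε y hε hy
    have h := (Nat.ceil_lt_add_one (div_nonneg hy.le hε.le)).le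
    calc ε * ((⌈y / ε⌉₊ : ℕ) : ℝ) ≤ ε * (y / ε + 1) := by
          exact mul_le_mul_of_nonneg_left h hε.le
      _ = y + ε := by field_simp
  -- the uniform bound
  have hbound : ∀ {ε y : ℝ}, ε ∈ Set.Ioc (0:ℝ) 1 → 0 < y →
      ‖g (ε * ((⌈y / ε⌉₊ : ℕ) : ℝ))‖ ≤ B y := by
    intro ε y hε hy
    set z := ε * ((⌈y / ε⌉₊ : ℕ) : ℝ) with hz_def
    have hz1 : y ≤ z := hceil_low hε.1 hy
    have hz2 : z ≤ y + 1 := le_trans (hceil_hi hε.1 hy) (by linarith [hε.2])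
    have hz0 : 0 < z := lt_of_lt_of_le hy hz1
    have hFz : |F z| ≤ C := hC z
    have hrp : z ^ (s-1) ≤ (2 ^ (s-1) + 1) * (1 + y ^ (s-1)) :=
      riemann_aux_rpow_step_bound hy hz1 hz2
    have hexp : Real.exp (-μ * z) ≤ Real.exp (-(μ * y)) := by
      apply Real.exp_le_exp.mpr; nlinarith
    have hzr : (0:ℝ) ≤ z ^ (s-1) := Real.rpow_nonneg hz0.le _
    have hern : (0:ℝ) ≤ Real.exp (-μ * z) := (Real.exp_pos _).le
    have h1 : ‖g z‖ ≤ C * (z ^ (s-1) * Real.exp (-μ * z)) := by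
      rw [hg_def]
      simp only [Real.norm_eq_abs, abs_mul, abs_of_nonneg hzr, abs_of_nonneg hern]
      rw [mul_assoc]
      exact mul_le_mul_of_nonneg_right hFz (by positivity)
    refine h1.trans ?_
    rw [hB_def]
    have h2 : z ^ (s-1) * Real.exp (-μ * z) ≤
        ((2 ^ (s-1) + 1) * (1 + y ^ (s-1))) * Real.exp (-(μ * y)) := by
      apply mul_le_mul hrp hexp hern
      positivity
    simpa [mul_assoc] using mul_le_mul_of_nonneg_left h2 hC0
  -- integrability of the bound
  have hBint : IntegrableOn B (Set.Ioi 0) := by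
    have i1 : IntegrableOn (fun y : ℝ => Real.exp (-(μ * y))) (Set.Ioi 0) := by
      simpa [neg_mul] using exp_neg_integrableOn_Ioi 0 hμ
    have i2 := riemann_aux_int_rpow_exp hs hμ
    have h3 : IntegrableOn (fun y : ℝ => (C * (2 ^ (s-1) + 1)) *
        (Real.exp (-(μ * y)) + y ^ (s-1) * Real.exp (-(μ * y)))) (Set.Ioi 0) :=
      (i1.add i2).const_mul _
    refine h3.congr_fun (fun y _ => ?_) measurableSet_Ioi
    rw [hB_def]; ring
  -- integrability of the step functions
  have hint : ∀ {ε : ℝ}, ε ∈ Set.Ioc (0:ℝ) 1 →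
      IntegrableOn (fun y : ℝ => g (ε * ((⌈y / ε⌉₊ : ℕ) : ℝ))) (Set.Ioi 0) := by
    intro ε hε
    refine Integrable.mono' hBint (hmeas ε) ?_
    rw [ae_restrict_iff' measurableSet_Ioi]
    exact ae_of_all _ fun y hy => hbound hε hy
  -- the sum equals the integral of the step function
  have sum_eq : ∀ {ε : ℝ}, ε ∈ Set.Ioc (0:ℝ) 1 →
      ε ^ s * ∑' N : ℕ+, Real.exp (-μ * ε * N) * (N : ℝ) ^ (s - 1) * F (ε * N)
        = ∫ y in Set.Ioi (0:ℝ), g (ε * ((⌈y / ε⌉₊ : ℕ) : ℝ)) := by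
    intro ε hε
    have hε0 : (0:ℝ) < ε := hε.1
    -- step 1: LHS = ∑' N : ℕ+, ε * g (ε * N)
    have step1 : ε ^ s * ∑' N : ℕ+, Real.exp (-μ * ε * N) * (N : ℝ) ^ (s - 1) * F (ε * N)
        = ∑' N : ℕ+, ε * g (ε * N) := by
      rw [← tsum_mul_left]
      apply tsum_congr
      intro N
      have hN : (0:ℝ) < (N : ℝ) := by exact_mod_cast N.pos
      have hmr : ((ε * N : ℝ)) ^ (s - 1) = ε ^ (s-1) * (N:ℝ) ^ (s-1) :=
        Real.mul_rpow hε0.le hN.le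
      have hεs : ε ^ s = ε ^ (1:ℝ) * ε ^ (s - 1) := by
        rw [← Real.rpow_add hε0]; norm_num
      have hexp : -μ * (ε * (N:ℝ)) = -μ * ε * N := by ring
      rw [hg_def]
      simp only []
      rw [hmr, hεs, Real.rpow_one, hexp]
      ring
    rw [step1]
    -- step 2: tsum over ℕ+ = tsum over ℕ
    have step2 : ∑' N : ℕ+, ε * g (ε * N) = ∑' n : ℕ, ε * g (ε * ((n:ℝ) + 1)) := by
      rw [← Equiv.pnatEquivNat.symm.tsum_eq (fun N : ℕ+ => ε * g (ε * N))]
      apply tsum_congr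
      intro n
      have : ((Equiv.pnatEquivNat.symm n : ℕ+) : ℝ) = (n : ℝ) + 1 := by
        simp [Equiv.pnatEquivNat]
      rw [this]
    rw [step2]
    -- step 3: decompose Ioi 0
    have hUnion : Set.Ioi (0:ℝ) = ⋃ n : ℕ, Set.Ioc (ε * n) (ε * ((n:ℝ) + 1)) := by
      ext y
      simp only [Set.mem_Ioi, Set.mem_iUnion, Set.mem_Ioc]
      constructor
      · intro hy
        have hk : 1 ≤ ⌈y / ε⌉₊ := Nat.one_le_ceil_iff.mpr (div_pos hy hε0)
        refine ⟨⌈y / ε⌉₊ - 1, ?_, ?_⟩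
        · have h := Nat.ceil_lt_add_one (div_nonneg hy.le hε0.le)
          have hc : ((⌈y / ε⌉₊ - 1 : ℕ) : ℝ) = (⌈y / ε⌉₊ : ℝ) - 1 := by
            push_cast [Nat.cast_sub hk]; ring
          rw [hc]
          have : (⌈y / ε⌉₊ : ℝ) - 1 < y / ε := by linarith
          calc ε * ((⌈y / ε⌉₊ : ℝ) - 1) < ε * (y / ε) := by
                exact mul_lt_mul_of_pos_left this hε0
            _ = y := by field_simp
        · have h := Nat.le_ceil (y / ε)
          have hc : ((⌈y / ε⌉₊ - 1 : ℕ) : ℝ) + 1 = (⌈y / ε⌉₊ : ℝ) := by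
            push_cast [Nat.cast_sub hk]; ring
          rw [hc]
          rw [div_le_iff₀ hε0] at h
          linarith
      · rintro ⟨n, h1, _⟩
        have : (0:ℝ) ≤ ε * n := by positivity
        linarith
    have hmeasI : ∀ n : ℕ, MeasurableSet (Set.Ioc (ε * (n:ℝ)) (ε * ((n:ℝ) + 1))) :=
      fun _ => measurableSet_Ioc
    have hdisj : Pairwise (Function.onFun Disjoint
        fun n : ℕ => Set.Ioc (ε * (n:ℝ)) (ε * ((n:ℝ) + 1))) := by
      intro m n hmn
      rw [Function.onFun, Set.Ioc_disjoint_Ioc]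
      rcases hmn.lt_or_gt with h | h
      · have hmn' : (m:ℝ) + 1 ≤ (n:ℝ) := by exact_mod_cast h
        calc min (ε * ((m:ℝ)+1)) (ε * ((n:ℝ)+1)) ≤ ε * ((m:ℝ)+1) := min_le_left _ _
          _ ≤ ε * (n:ℝ) := by nlinarith
          _ ≤ max (ε * (m:ℝ)) (ε * (n:ℝ)) := le_max_right _ _
      · have hmn' : (n:ℝ) + 1 ≤ (m:ℝ) := by exact_mod_cast h
        calc min (ε * ((m:ℝ)+1)) (ε * ((n:ℝ)+1)) ≤ ε * ((n:ℝ)+1) := min_le_right _ _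
          _ ≤ ε * (m:ℝ) := by nlinarith
          _ ≤ max (ε * (m:ℝ)) (ε * (n:ℝ)) := le_max_left _ _
    have hint' := hint hε
    rw [hUnion] at hint' ⊢
    rw [MeasureTheory.integral_iUnion hmeasI hdisj hint']
    -- step 4: each piece
    apply tsum_congr
    intro n
    have hpiece : Set.EqOn (fun y : ℝ => g (ε * ((⌈y / ε⌉₊ : ℕ) : ℝ)))
        (fun _ => g (ε * ((n:ℝ) + 1))) (Set.Ioc (ε * (n:ℝ)) (ε * ((n:ℝ) + 1))) := by
      intro y hy
      simp only [Set.mem_Ioc] at hy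
      have hceil : ⌈y / ε⌉₊ = n + 1 := by
        rw [Nat.ceil_eq_iff (Nat.succ_ne_zero n)]
        constructor
        · push_cast
          rw [lt_div_iff₀ hε0]
          nlinarith [hy.1]
        · rw [div_le_iff₀ hε0]
          push_cast
          calc y ≤ ε * ((n:ℝ) + 1) := hy.2
            _ = ((n:ℝ) + 1) * ε := by ring
      simp only [hceil]
      push_cast
      ring_nf
    rw [MeasureTheory.setIntegral_congr_fun measurableSet_Ioc hpiece,
      MeasureTheory.setIntegral_const]
    rw [Real.volume_real_Ioc]
    have : ε * ((n:ℝ) + 1) - ε * n = ε := by ring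
    rw [this, max_eq_left hε0.le, smul_eq_mul]
  -- the dominated convergence argument
  have hDCT : Tendsto (fun ε : ℝ => ∫ y in Set.Ioi (0:ℝ), g (ε * ((⌈y / ε⌉₊ : ℕ) : ℝ)))
      (nhdsWithin 0 (Set.Ioi 0)) (nhds (∫ y in Set.Ioi (0:ℝ), g y)) := by
    apply MeasureTheory.tendsto_integral_filter_of_dominated_convergence B
    · exact Eventually.of_forall hmeas
    · filter_upwards [Ioc_mem_nhdsGT_of_mem (Set.left_mem_Ico.mpr zero_lt_one)] with ε hε
      rw [ae_restrict_iff' measurableSet_Ioi]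
      exact ae_of_all _ fun y hy => hbound hε hy
    · exact hBint
    · rw [ae_restrict_iff' measurableSet_Ioi]
      refine ae_of_all _ fun y hy => ?_
      have hyz : Tendsto (fun ε : ℝ => ε * ((⌈y / ε⌉₊ : ℕ) : ℝ))
          (nhdsWithin 0 (Set.Ioi 0)) (nhds y) := by
        apply tendsto_of_tendsto_of_tendsto_of_le_of_le'
          (tendsto_const_nhds : Tendsto (fun _ : ℝ => y) _ (nhds y))
          (show Tendsto (fun ε : ℝ => y + ε) (nhdsWithin 0 (Set.Ioi 0)) (nhds y) by
            have := (tendsto_const_nhds.add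
              (tendsto_id.mono_left nhdsWithin_le_nhds) :
              Tendsto (fun ε : ℝ => y + ε) (nhdsWithin 0 (Set.Ioi 0)) (nhds (y + 0)))
            simpa using this)
        · filter_upwards [self_mem_nhdsWithin] with ε hε
          exact hceil_low hε hy
        · filter_upwards [self_mem_nhdsWithin] with ε hε
          exact hceil_hi hε hy
      have hgc : ContinuousAt g y := by
        apply ContinuousAt.mul
        · apply ContinuousAt.mul hF_cont.continuousAt
          exact Real.continuousAt_rpow_const y (s-1) (Or.inl hy.ne')
        · exact (Real.continuous_exp.comp (continuous_const.mul continuous_id)).continuousAt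
      exact hgc.tendsto.comp hyz
  -- conclude
  apply hDCT.congr'
  filter_upwards [Ioc_mem_nhdsGT_of_mem (Set.left_mem_Ico.mpr zero_lt_one)] with ε hε
  exact (sum_eq hε).symm
end
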